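/- Let (X,d) be a compact metric space, y^1,…,y^n ∈ X distinct points, μ = (1/n) Σ_j δ_{y^j}, and δ > 0 such that the balls B_δ(y^j) are pairwise disjoint. Let ψ ∈ ℝⁿ be a dual maximizer for W₂²(ν,μ) with Laguerre cells A_j, and let π ∈ Γ₀(ν,μ) be an optimal coupling. Then for each j, | ν(B_δ(y^j)) - 1/n | ≤ C · W₂²(ν, μ) / δ², for a constant C depending only on n. In particular, ν(B_δ(y^j)) → 1/n as ν → μ in W₂. -/

import Mathlib

open MeasureTheory Filter

/-- `π` is a coupling of `ν` and `μ`. -/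
def IsCoupling {X : Type*} [MeasurableSpace X]
    (π : Measure (X × X)) (ν μ : Measure X) : Prop :=
  π.map Prod.fst = ν ∧ π.map Prod.snd = μ

/-- `π` is an optimal coupling of `ν` and `μ` for the squared-distance cost. -/
def IsOptimalCoupling {X : Type*} [MetricSpace X] [MeasurableSpace X]
    (π : Measure (X × X)) (ν μ : Measure X) : Prop :=
  IsCoupling π ν μ ∧ ∀ π' : Measure (X × X), IsCoupling π' ν μ →
    (∫ p : X × X, dist p.1 p.2 ^ 2 ∂π) ≤ ∫ p : X × X, dist p.1 p.2 ^ 2 ∂π'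

/-- The c-transform `ψ^c(x) = min_j ( d²(x, y^j) - ψ^j )`. -/
noncomputable def psiC {X : Type*} [MetricSpace X] {n : ℕ}
    (y : Fin n → X) (ψ : Fin n → ℝ) (x : X) : ℝ :=
  ⨅ j, (dist x (y j) ^ 2 - ψ j)

/-- The Kantorovich dual functional for semi-discrete optimal transport with
uniform weights `1/n`. -/
noncomputable def dualFun {X : Type*} [MetricSpace X] [MeasurableSpace X] {n : ℕ}
    (y : Fin n → X) (ν : Measure X) (ψ : Fin n → ℝ) : ℝ :=
  (∫ x, psiC y ψ x ∂ν) + ∑ j, (1 / (n : ℝ)) * ψ j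

/-- The empirical measure `(1/n) Σ_j δ_{y^j}`. -/
noncomputable def emp {Ω : Type*} [MeasurableSpace Ω] (n : ℕ)
    (x : Fin n → Ω) : Measure Ω :=
  (n : ENNReal)⁻¹ • ∑ j, Measure.dirac (x j)

/-!
For any coupling `π` of `ν` and `μ = (1/n) Σ_j δ_{y^j}`, the masses `ν(B_δ(y^j))` and
`μ{y^j} = 1/n` differ by at most the `π`-mass of the pairs `(x, z)` with exactly one of
`x ∈ B_δ(y^j)`, `z = y^j`. Since `π`-a.e. `z` is one of the `y^i` and the balls are disjoint,
such a pair has `x ∉ B_δ(z)`, i.e. `d(x, z) ≥ δ`, and Markov's inequality bounds its mass by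
`∫ d² dπ / δ²`. So `C = 1` works.
-/

open Set Metric Function
open scoped symmDiff

lemma abs_measureReal_sub_le_measureReal_symmDiff {α : Type*} [MeasurableSpace α]
    (μ : Measure α) [IsFiniteMeasure μ] (s t : Set α) :
    |μ.real s - μ.real t| ≤ μ.real (s ∆ t) := by
  rw [abs_sub_le_iff]
  constructor <;>
    exact (le_measureReal_sdiff ..).trans (measureReal_mono (by simp [Set.symmDiff_def]))

lemma measureReal_setOf_le_dist_le_integral_div {X : Type*} [PseudoMetricSpace X]
    [MeasurableSpace X] (π : Measure (X × X))
    (hint : Integrable (fun p : X × X ↦ dist p.1 p.2 ^ 2) π) {δ : ℝ} (hδ : 0 < δ) :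
    π.real {p | δ ≤ dist p.1 p.2} ≤ (∫ p, dist p.1 p.2 ^ 2 ∂π) / δ ^ 2 := by
  have hsq : {p : X × X | δ ≤ dist p.1 p.2} = {p | δ ^ 2 ≤ dist p.1 p.2 ^ 2} := by
    ext p
    simp [pow_le_pow_iff_left₀ hδ.le dist_nonneg]
  rw [le_div_iff₀ (by positivity), mul_comm, hsq]
  exact mul_meas_ge_le_integral_of_nonneg (ae_of_all _ fun _ ↦ sq_nonneg _) hint _

lemma integrable_dist_sq_of_compactSpace {X : Type*} [PseudoMetricSpace X] [CompactSpace X]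
    [MeasurableSpace X] [OpensMeasurableSpace X]
    (π : Measure (X × X)) [IsFiniteMeasure π] :
    Integrable (fun p : X × X ↦ dist p.1 p.2 ^ 2) π :=
  (by fun_prop : Continuous fun p : X × X ↦ dist p.1 p.2 ^ 2).integrable_of_hasCompactSupport
    (.of_compactSpace _)

lemma symmDiff_preimage_ball_singleton_inter_subset {X ι : Type*} [PseudoMetricSpace X]
    {y : ι → X} {δ : ℝ} (hdisj : Pairwise (Disjoint on fun i ↦ ball (y i) δ)) (j : ι) :
    ((Prod.fst ⁻¹' ball (y j) δ) ∆ (Prod.snd ⁻¹' {y j})) ∩ Prod.snd ⁻¹' range y ⊆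
      {p | δ ≤ dist p.1 p.2} := by
  rintro ⟨x, _⟩ ⟨hsd, i, rfl⟩
  suffices x ∉ ball (y i) δ from not_lt.1 (mt mem_ball.2 this)
  rcases eq_or_ne (y i) (y j) with hij | hij
  · simp_all [Set.mem_symmDiff]
  · have hxj : x ∈ ball (y j) δ := by simp_all [Set.mem_symmDiff]
    exact fun hxi ↦ (hdisj (ne_of_apply_ne y hij)).ne_of_mem hxi hxj rfl

section Emp
variable {Ω : Type*} [MeasurableSpace Ω] [MeasurableSingletonClass Ω] {n : ℕ} {x : Fin n → Ω}

lemma emp_compl_range : emp n x (range x)ᶜ = 0 := by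
  simp [emp, Measure.dirac_apply]

lemma emp_singleton (hx : Injective x) (j : Fin n) :
    emp n x {x j} = (n : ENNReal)⁻¹ := by
  simp [emp, Set.indicator, hx.eq_iff]

end Emp

namespace IsCoupling
variable {X : Type*} [MeasurableSpace X] {π : Measure (X × X)} {ν μ : Measure X}

lemma isProbabilityMeasure [IsProbabilityMeasure ν] (h : IsCoupling π ν μ) :
    IsProbabilityMeasure π :=
  have : IsProbabilityMeasure (π.map Prod.fst) := h.1 ▸ ‹_›
  Measure.isProbabilityMeasure_of_map Prod.fst

lemma abs_measureReal_sub_le [IsFiniteMeasure π] (h : IsCoupling π ν μ) {s t : Set X}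
    (hs : MeasurableSet s) (ht : MeasurableSet t) :
    |ν.real s - μ.real t| ≤ π.real ((Prod.fst ⁻¹' s) ∆ (Prod.snd ⁻¹' t)) := by
  rw [← h.1, ← h.2, map_measureReal_apply measurable_fst hs,
    map_measureReal_apply measurable_snd ht]
  exact abs_measureReal_sub_le_measureReal_symmDiff π _ _

lemma ae_snd_mem_range_of_emp {n : ℕ} {y : Fin n → X} [MeasurableSingletonClass X]
    (h : IsCoupling π ν (emp n y)) : ∀ᵐ p ∂π, p.2 ∈ range y :=
  ae_of_ae_map measurable_snd.aemeasurable <| h.2 ▸ mem_ae_iff.2 emp_compl_range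

theorem abs_measureReal_ball_sub_le [MetricSpace X] [OpensMeasurableSpace X] {n : ℕ}
    {y : Fin n → X} [IsProbabilityMeasure ν] (hπ : IsCoupling π ν (emp n y))
    (hy : Injective y) {δ : ℝ} (hδ : 0 < δ)
    (hdisj : Pairwise (Disjoint on fun i ↦ ball (y i) δ))
    (hint : Integrable (fun p : X × X ↦ dist p.1 p.2 ^ 2) π) (j : Fin n) :
    |ν.real (ball (y j) δ) - 1 / n| ≤ (∫ p, dist p.1 p.2 ^ 2 ∂π) / δ ^ 2 := by
  have := hπ.isProbabilityMeasure
  have hmass : (emp n y).real {y j} = 1 / n := by simp [measureReal_def, emp_singleton hy]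
  calc |ν.real (ball (y j) δ) - 1 / n|
      = |ν.real (ball (y j) δ) - (emp n y).real {y j}| := by rw [hmass]
    _ ≤ π.real ((Prod.fst ⁻¹' ball (y j) δ) ∆ (Prod.snd ⁻¹' {y j})) :=
      hπ.abs_measureReal_sub_le measurableSet_ball (measurableSet_singleton _)
    _ ≤ π.real {p | δ ≤ dist p.1 p.2} := ENNReal.toReal_mono (measure_ne_top _ _) <|
      measure_mono_ae <| hπ.ae_snd_mem_range_of_emp.mono fun _ hp hsd ↦
        symmDiff_preimage_ball_singleton_inter_subset hdisj j ⟨hsd, hp⟩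
    _ ≤ (∫ p, dist p.1 p.2 ^ 2 ∂π) / δ ^ 2 :=
      measureReal_setOf_le_dist_le_integral_div π hint hδ

end IsCoupling

theorem stmt18_general (n : ℕ) :
    ∃ C : ℝ, 0 < C ∧
      ∀ (X : Type) [MetricSpace X] [MeasurableSpace X] [BorelSpace X]
        [CompactSpace X],
        ∀ (y : Fin n → X), Function.Injective y →
        ∀ δ : ℝ, 0 < δ →
        (∀ i j : Fin n, i ≠ j →
          Disjoint (Metric.ball (y i) δ) (Metric.ball (y j) δ)) →
        ∀ ν : Measure X, IsProbabilityMeasure ν →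
        ∀ ψ : Fin n → ℝ, (∀ φ : Fin n → ℝ, dualFun y ν φ ≤ dualFun y ν ψ) →
        ∀ π : Measure (X × X), IsOptimalCoupling π ν (emp n y) →
        (∀ j : Fin n,
          |(ν (Metric.ball (y j) δ)).toReal - 1 / (n : ℝ)| ≤
            C * (∫ p : X × X, dist p.1 p.2 ^ 2 ∂π) / δ ^ 2) ∧
        (∀ (νs : ℕ → Measure X) (πs : ℕ → Measure (X × X)),
          (∀ k, IsProbabilityMeasure (νs k)) →
          (∀ k, IsOptimalCoupling (πs k) (νs k) (emp n y)) →
          Tendsto (fun k => ∫ p : X × X, dist p.1 p.2 ^ 2 ∂(πs k)) atTop (nhds 0) →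
          (∀ k, ∃ ψk : Fin n → ℝ,
            ∀ φ : Fin n → ℝ, dualFun y (νs k) φ ≤ dualFun y (νs k) ψk) →
          ∀ j : Fin n,
            Tendsto (fun k => ((νs k) (Metric.ball (y j) δ)).toReal) atTop
              (nhds (1 / (n : ℝ)))) := by
  refine ⟨1, one_pos, fun X _ _ _ _ y hy δ hδ hdisj ν hν _ _ π hπ ↦ ⟨fun j ↦ ?_, ?_⟩⟩
  · have := hπ.1.isProbabilityMeasure
    rw [one_mul]
    exact hπ.1.abs_measureReal_ball_sub_le hy hδ hdisj
      (integrable_dist_sq_of_compactSpace π) j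
  · intro νs πs hνs hπs hW _ j
    have hbound (k : ℕ) : dist ((νs k).real (ball (y j) δ)) (1 / n) ≤
        (∫ p, dist p.1 p.2 ^ 2 ∂πs k) / δ ^ 2 := by
      have := (hπs k).1.isProbabilityMeasure
      exact (hπs k).1.abs_measureReal_ball_sub_le hy hδ hdisj
        (integrable_dist_sq_of_compactSpace (πs k)) j
    rw [tendsto_iff_dist_tendsto_zero]
    exact squeeze_zero (fun _ ↦ dist_nonneg) hbound (by simpa using hW.div_const (δ ^ 2))

/-- Mass-localization estimate: for a constant `C` depending only on `n`,
`|ν(B_δ(y^j)) - 1/n| ≤ C W₂²(ν, μ)/δ²` (with `W₂²(ν,μ) = ∫ d² dπ` for an optimal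
coupling `π`).  In particular `ν(B_δ(y^j)) → 1/n` as `ν → μ` in `W₂`. -/
theorem stmt18 (n : ℕ) (hn : 0 < n) :
    ∃ C : ℝ, 0 < C ∧
      ∀ (X : Type) [MetricSpace X] [MeasurableSpace X] [BorelSpace X]
        [CompactSpace X],
        ∀ (y : Fin n → X), Function.Injective y →
        ∀ δ : ℝ, 0 < δ →
        (∀ i j : Fin n, i ≠ j →
          Disjoint (Metric.ball (y i) δ) (Metric.ball (y j) δ)) →
        ∀ ν : Measure X, IsProbabilityMeasure ν →
        ∀ ψ : Fin n → ℝ, (∀ φ : Fin n → ℝ, dualFun y ν φ ≤ dualFun y ν ψ) →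
        ∀ π : Measure (X × X), IsOptimalCoupling π ν (emp n y) →
        (∀ j : Fin n,
          |(ν (Metric.ball (y j) δ)).toReal - 1 / (n : ℝ)| ≤
            C * (∫ p : X × X, dist p.1 p.2 ^ 2 ∂π) / δ ^ 2) ∧
        (∀ (νs : ℕ → Measure X) (πs : ℕ → Measure (X × X)),
          (∀ k, IsProbabilityMeasure (νs k)) →
          (∀ k, IsOptimalCoupling (πs k) (νs k) (emp n y)) →
          Tendsto (fun k => ∫ p : X × X, dist p.1 p.2 ^ 2 ∂(πs k)) atTop (nhds 0) →
          (∀ k, ∃ ψk : Fin n → ℝ,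
            ∀ φ : Fin n → ℝ, dualFun y (νs k) φ ≤ dualFun y (νs k) ψk) →
          ∀ j : Fin n,
            Tendsto (fun k => ((νs k) (Metric.ball (y j) δ)).toReal) atTop
              (nhds (1 / (n : ℝ)))) :=
  stmt18_general n
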